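/- Let (A₀, A₁) be a compatible couple of Banach spaces. Then for every x = (x_i) ∈ ℓ₁(A₀) + ℓ_∞(A₁) (no finite support assumption) and every t > 0, K_t(x; ℓ₁(A₀), ℓ_∞(A₁)) = sup { Σ_i K_{t_i}(x_i; A₀, A₁) : t_i ≥ 0, Σ_i t_i ≤ t }. -/

import Mathlib

open MeasureTheory ENNReal Set Filter

/-- The Peetre `K_t`-functional of a compatible couple `(A₀, A₁)` of spaces
continuously embedded (via `j₀, j₁`) in a common topological vector space `V`. -/
noncomputable def Kfun {V A₀ A₁ : Type*} [AddCommGroup V] [Module ℝ V]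
    [NormedAddCommGroup A₀] [NormedSpace ℝ A₀] [NormedAddCommGroup A₁] [NormedSpace ℝ A₁]
    (j₀ : A₀ →ₗ[ℝ] V) (j₁ : A₁ →ₗ[ℝ] V) (t : ℝ) (v : V) : ℝ :=
  sInf {r | ∃ (a : A₀) (b : A₁), v = j₀ a + j₁ b ∧ r = ‖a‖ + t * ‖b‖}

/-- The `K_t`-functional of the couple `(ℓ₁(A₀), ℓ_∞(A₁))`, viewed inside the space
of `V`-valued sequences. -/
noncomputable def Kl1linf {V A₀ A₁ : Type*} [AddCommGroup V] [Module ℝ V]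
    [NormedAddCommGroup A₀] [NormedSpace ℝ A₀] [NormedAddCommGroup A₁] [NormedSpace ℝ A₁]
    (j₀ : A₀ →ₗ[ℝ] V) (j₁ : A₁ →ₗ[ℝ] V) (t : ℝ) (x : ℕ → V) : ℝ :=
  sInf {r | ∃ (a : ℕ → A₀) (b : ℕ → A₁), Summable (fun i => ‖a i‖) ∧
      BddAbove (Set.range fun i => ‖b i‖) ∧ (∀ i, x i = j₀ (a i) + j₁ (b i)) ∧
      r = (∑' i, ‖a i‖) + t * (⨆ i, ‖b i‖)}

/-- Membership in `ℓ₁(A₀) + ℓ_∞(A₁)` (as `V`-valued sequences). -/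
def MemSumSeq {V A₀ A₁ : Type*} [AddCommGroup V] [Module ℝ V]
    [NormedAddCommGroup A₀] [NormedSpace ℝ A₀] [NormedAddCommGroup A₁] [NormedSpace ℝ A₁]
    (j₀ : A₀ →ₗ[ℝ] V) (j₁ : A₁ →ₗ[ℝ] V) (x : ℕ → V) : Prop :=
  ∃ (a : ℕ → A₀) (b : ℕ → A₁), Summable (fun i => ‖a i‖) ∧
    BddAbove (Set.range fun i => ‖b i‖) ∧ ∀ i, x i = j₀ (a i) + j₁ (b i)

/-- `sup { Σᵢ K_{tᵢ}(xᵢ) : tᵢ ≥ 0, Σ tᵢ ≤ t }`. -/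
noncomputable def KsupSum {V A₀ A₁ : Type*} [AddCommGroup V] [Module ℝ V]
    [NormedAddCommGroup A₀] [NormedSpace ℝ A₀] [NormedAddCommGroup A₁] [NormedSpace ℝ A₁]
    (j₀ : A₀ →ₗ[ℝ] V) (j₁ : A₁ →ₗ[ℝ] V) (t : ℝ) (x : ℕ → V) : ℝ :=
  sSup {s | ∃ τ : ℕ → ℝ, (∀ i, 0 ≤ τ i) ∧ Summable τ ∧ (∑' i, τ i) ≤ t ∧
      Summable (fun i => Kfun j₀ j₁ (τ i) (x i)) ∧ s = ∑' i, Kfun j₀ j₁ (τ i) (x i)}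

/-!
Write `E(μ, v) = inf {‖a‖ : v = a + b, ‖b‖ ≤ μ}`, which is convex and decreasing in `μ`. Then
`K_s(v) = inf_μ (E(μ, v) + s μ)` and `K_t(x; ℓ₁(A₀), ℓ_∞(A₁)) = inf_μ (F(μ) + t μ)` with
`F = ∑ᵢ E(·, xᵢ)`, so the claim is Lagrange duality for the constraints `‖bᵢ‖ ≤ μ`, with the
`tᵢ` as multipliers. To find them, scan a grid of step `h` for a level `q` where `F` drops by at
most `t h` over `[q, q + h]` but by at least `t h` over `[q - h, q]` (`F = ∞` left of its domain).
By convexity the drops of each `E(·, xᵢ)` over these two steps are ordered, so `t h` splits into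
pieces `uᵢ` lying between them; then the slopes `tᵢ = uᵢ / h` sum to `t`, the line of slope `-tᵢ`
through `(q, E(q, xᵢ) - uᵢ)` stays below `E(·, xᵢ)`, and `∑ᵢ K_{tᵢ}(xᵢ) ≥ F(q) + t (q - h)`, while
`K_t(x) ≤ F(q) + t q + ε`.
-/

theorem ENNReal.exists_le_tsum_eq_of_le_tsum {w : ℕ → ℝ≥0∞} {s : ℝ≥0∞}
    (hs : s ≤ ∑' i, w i) : ∃ c ≤ w, ∑' i, c i = s := by
  set m : ℕ → ℝ≥0∞ := fun n => min s (∑ i ∈ Finset.range n, w i)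
  have hm : Monotone m := fun k n hkn =>
    min_le_min_left s (Finset.sum_le_sum_of_subset (Finset.range_mono hkn))
  have hsum : ∀ n, ∑ i ∈ Finset.range n, (m (i + 1) - m i) = m n := by
    intro n
    induction n with
    | zero => simp [m]
    | succ n ih => rw [Finset.sum_range_succ, ih, add_tsub_cancel_of_le (hm n.le_succ)]
  refine ⟨fun n => m (n + 1) - m n, fun n => ?_, ?_⟩
  · rw [tsub_le_iff_left]
    calc m (n + 1) ≤ min (s + w n) (∑ i ∈ Finset.range n, w i + w n) := by
          simp only [m, Finset.sum_range_succ]; exact min_le_min_right _ le_self_add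
      _ = m n + w n := min_add_add_right _ _ _
  · rw [ENNReal.tsum_eq_iSup_nat] at hs ⊢
    simp only [hsum, m, ← inf_iSup_eq, inf_eq_left.2 hs]

theorem ENNReal.exists_tsum_eq_of_le_of_le {R L : ℕ → ℝ≥0∞} {s : ℝ≥0∞} (hRL : R ≤ L)
    (hR : ∑' i, R i ≤ s) (hL : s ≤ ∑' i, L i) : ∃ u, R ≤ u ∧ u ≤ L ∧ ∑' i, u i = s := by
  have hgap : s - ∑' i, R i ≤ ∑' i, (L i - R i) := by
    rw [tsub_le_iff_right, ← ENNReal.tsum_add]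
    exact hL.trans (ENNReal.tsum_le_tsum fun i => le_tsub_add)
  obtain ⟨c, hc, hcs⟩ := ENNReal.exists_le_tsum_eq_of_le_tsum hgap
  refine ⟨R + c, fun i => le_self_add, fun i => ?_, ?_⟩
  · calc R i + c i ≤ R i + (L i - R i) := by gcongr; exact hc i
      _ = L i := add_tsub_cancel_of_le (hRL i)
  · rw [Pi.add_def, ENNReal.tsum_add, hcs, add_tsub_cancel_of_le hR]

theorem Antitone.exists_drop_crossing {F : ℝ → ℝ≥0∞} (hF : Antitone F) {h : ℝ} (hh : 0 < h)
    {c : ℝ≥0∞} (hc : c ≠ 0) {p μ : ℝ} (hp : F p = ∞) (hμ : F μ ≠ ∞) :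
    ∃ q, F q ≠ ∞ ∧ F q ≤ F (q + h) + c ∧ F q + c ≤ F (q - h) := by
  classical
  set g : ℕ → ℝ := fun n => p + n * h
  have hg : ∀ n, g (n + 1) = g n + h := fun n => by simp only [g]; push_cast; ring
  obtain ⟨N, hN⟩ := exists_nat_gt ((μ - p) / h)
  have hgN : ∀ n ≥ N, F (g n) ≠ ∞ := fun n hn => ne_top_of_le_ne_top hμ <| hF <| by
    have : (μ - p) / h * h < n * h := by gcongr; exact hN.trans_le (by exact_mod_cast hn)
    rw [div_mul_cancel₀ _ hh.ne'] at this
    simp only [g]; linarith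
  have hex : ∃ n, F (g n) ≠ ∞ ∧ F (g n) ≤ F (g (n + 1)) + c := by
    by_contra! hsteep
    have hdrop : ∀ k : ℕ, F (g (N + k)) + k * c ≤ F (g N) := by
      intro k
      induction k with
      | zero => simp
      | succ k ih =>
        calc F (g (N + (k + 1))) + ((k + 1 : ℕ) : ℝ≥0∞) * c
            = (F (g (N + k + 1)) + c) + k * c := by rw [← add_assoc]; push_cast; ring
          _ ≤ F (g (N + k)) + k * c := by
            gcongr; exact (hsteep _ (hgN _ (Nat.le_add_right N k))).le
          _ ≤ F (g N) := ih
    obtain ⟨k, hk⟩ := ENNReal.exists_nat_mul_gt hc (hgN N le_rfl)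
    exact (hk.trans_le (le_add_self.trans (hdrop k))).false
  obtain ⟨m, hm⟩ : ∃ m, Nat.find hex = m + 1 :=
    Nat.exists_eq_succ_of_ne_zero fun h0 => (Nat.find_spec hex).1 (by rw [h0]; simpa [g] using hp)
  have hspec := Nat.find_spec hex
  have hmin := Nat.find_min hex (show m < Nat.find hex by omega)
  rw [hm] at hspec
  refine ⟨g (m + 1), hspec.1, hspec.2.trans_eq (by rw [hg]), ?_⟩
  rw [hg, add_sub_cancel_right, ← hg]
  by_cases hfin : F (g m) = ∞
  · rw [hfin]; exact le_top
  · push Not at hmin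
    exact (hmin hfin).le

section Efun

variable {V A₀ A₁ : Type*} [AddCommGroup V] [Module ℝ V]
  [NormedAddCommGroup A₀] [NormedSpace ℝ A₀] [NormedAddCommGroup A₁] [NormedSpace ℝ A₁]

/-- Peetre's `E`-functional; an infimum over no decomposition is `∞`. -/
noncomputable def Efun (j₀ : A₀ →ₗ[ℝ] V) (j₁ : A₁ →ₗ[ℝ] V) (μ : ℝ) (v : V) : ℝ≥0∞ :=
  ⨅ d : {d : A₀ × A₁ // v = j₀ d.1 + j₁ d.2 ∧ ‖d.2‖ ≤ μ}, ‖d.1.1‖ₑ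

variable {j₀ : A₀ →ₗ[ℝ] V} {j₁ : A₁ →ₗ[ℝ] V} {v : V}

theorem Efun_le {μ : ℝ} {a : A₀} {b : A₁} (hab : v = j₀ a + j₁ b) (hb : ‖b‖ ≤ μ) :
    Efun j₀ j₁ μ v ≤ ‖a‖ₑ :=
  iInf_le_of_le ⟨(a, b), hab, hb⟩ le_rfl

theorem Efun_antitone (v : V) : Antitone fun μ => Efun j₀ j₁ μ v :=
  fun _ _ hμ => le_iInf fun d => Efun_le d.2.1 (d.2.2.trans hμ)

theorem Efun_of_neg {μ : ℝ} (hμ : μ < 0) : Efun j₀ j₁ μ v = ∞ :=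
  iInf_eq_top.2 fun d => absurd (d.2.2.trans_lt hμ) (norm_nonneg _).not_gt

theorem exists_eq_add_enorm_lt {μ : ℝ} {r : ℝ≥0∞} (h : Efun j₀ j₁ μ v < r) :
    ∃ a b, v = j₀ a + j₁ b ∧ ‖b‖ ≤ μ ∧ ‖a‖ₑ < r := by
  obtain ⟨⟨⟨a, b⟩, hab, hb⟩, ha⟩ := iInf_lt_iff.1 h
  exact ⟨a, b, hab, hb, ha⟩

theorem Efun_convex_combo {p r α β : ℝ} (hα : 0 < α) (hβ : 0 < β) (hαβ : α + β = 1) :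
    Efun j₀ j₁ (α * p + β * r) v ≤
      ENNReal.ofReal α * Efun j₀ j₁ p v + ENNReal.ofReal β * Efun j₀ j₁ r v := by
  unfold Efun
  rw [ENNReal.mul_iInf_of_ne (by simpa using hα) ENNReal.ofReal_ne_top,
    ENNReal.mul_iInf_of_ne (by simpa using hβ) ENNReal.ofReal_ne_top]
  refine ENNReal.le_iInf_add_iInf fun ⟨(a₁, b₁), h₁, hb₁⟩ ⟨(a₂, b₂), h₂, hb₂⟩ => ?_
  have hdec : v = j₀ (α • a₁ + β • a₂) + j₁ (α • b₁ + β • b₂) := calc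
    v = α • v + β • v := by rw [← add_smul, hαβ, one_smul]
    _ = α • (j₀ a₁ + j₁ b₁) + β • (j₀ a₂ + j₁ b₂) := by rw [← h₁, ← h₂]
    _ = _ := by simp only [map_add, map_smul]; module
  have hb : ‖α • b₁ + β • b₂‖ ≤ α * p + β * r := calc
    _ ≤ ‖α • b₁‖ + ‖β • b₂‖ := norm_add_le _ _
    _ = α * ‖b₁‖ + β * ‖b₂‖ := by
      rw [norm_smul, norm_smul, Real.norm_of_nonneg hα.le, Real.norm_of_nonneg hβ.le]
    _ ≤ α * p + β * r := by gcongr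
  calc _ ≤ ‖α • a₁ + β • a₂‖ₑ := Efun_le hdec hb
    _ ≤ ‖α • a₁‖ₑ + ‖β • a₂‖ₑ := enorm_add_le _ _
    _ = _ := by rw [enorm_smul, enorm_smul, Real.enorm_of_nonneg hα.le, Real.enorm_of_nonneg hβ.le]

theorem Efun_chord {p q r : ℝ} (hpq : p < q) (hqr : q < r) (hp : Efun j₀ j₁ p v ≠ ∞) :
    (r - p) * (Efun j₀ j₁ q v).toReal ≤
      (r - q) * (Efun j₀ j₁ p v).toReal + (q - p) * (Efun j₀ j₁ r v).toReal := by
  have hrp : 0 < r - p := by linarith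
  have hr : Efun j₀ j₁ r v ≠ ∞ := ne_top_of_le_ne_top hp (Efun_antitone v (hpq.trans hqr).le)
  have hcombo := Efun_convex_combo (j₀ := j₀) (j₁ := j₁) (v := v) (p := p) (r := r)
    (div_pos (sub_pos.2 hqr) hrp) (div_pos (sub_pos.2 hpq) hrp) (by field_simp; ring)
  rw [show (r - q) / (r - p) * p + (q - p) / (r - p) * r = q by field_simp; ring] at hcombo
  have := ENNReal.toReal_mono (by finiteness) hcombo
  rw [ENNReal.toReal_add (by finiteness) (by finiteness), ENNReal.toReal_mul, ENNReal.toReal_mul,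
    ENNReal.toReal_ofReal (by positivity), ENNReal.toReal_ofReal (by positivity)] at this
  calc (r - p) * (Efun j₀ j₁ q v).toReal
      ≤ (r - p) * ((r - q) / (r - p) * (Efun j₀ j₁ p v).toReal
          + (q - p) / (r - p) * (Efun j₀ j₁ r v).toReal) := by gcongr
    _ = _ := by field_simp

theorem Efun_sub_le_sub {q h : ℝ} (hh : 0 < h) (hq : Efun j₀ j₁ q v ≠ ∞) :
    Efun j₀ j₁ q v - Efun j₀ j₁ (q + h) v ≤ Efun j₀ j₁ (q - h) v - Efun j₀ j₁ q v := by
  by_cases hp : Efun j₀ j₁ (q - h) v = ∞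
  · simp [hp, hq]
  have hchord := Efun_chord (by linarith : q - h < q) (by linarith : q < q + h) hp
  have hr := Efun_antitone (j₀ := j₀) (j₁ := j₁) v (by linarith : q ≤ q + h)
  have hl := Efun_antitone (j₀ := j₀) (j₁ := j₁) v (by linarith : q - h ≤ q)
  rw [← ENNReal.toReal_le_toReal (by finiteness) (by finiteness),
    ENNReal.toReal_sub_of_le hr hq, ENNReal.toReal_sub_of_le hl hp]
  nlinarith

theorem Kfun_nonneg {s : ℝ} (hs : 0 ≤ s) : 0 ≤ Kfun j₀ j₁ s v :=
  Real.sInf_nonneg fun _ ⟨_, _, _, hr⟩ => hr ▸ by positivity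

theorem Kfun_le {s : ℝ} (hs : 0 ≤ s) {a : A₀} {b : A₁} (hab : v = j₀ a + j₁ b) :
    Kfun j₀ j₁ s v ≤ ‖a‖ + s * ‖b‖ :=
  csInf_le ⟨0, fun _ ⟨_, _, _, hr⟩ => hr ▸ by positivity⟩ ⟨a, b, hab, rfl⟩

theorem le_Kfun {s c : ℝ} (hv : ∃ a b, v = j₀ a + j₁ b)
    (h : ∀ a b, v = j₀ a + j₁ b → c ≤ ‖a‖ + s * ‖b‖) : c ≤ Kfun j₀ j₁ s v := by
  obtain ⟨a, b, hab⟩ := hv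
  exact le_csInf ⟨_, a, b, hab, rfl⟩ fun _ ⟨a, b, hab, hr⟩ => hr ▸ h a b hab

theorem toReal_Efun_add_le_of_drops {q h τ ν : ℝ} (hh : 0 < h) (hτ : 0 ≤ τ)
    (hq : Efun j₀ j₁ q v ≠ ∞) (hν : Efun j₀ j₁ ν v ≠ ∞)
    (hR : (Efun j₀ j₁ q v).toReal ≤ (Efun j₀ j₁ (q + h) v).toReal + τ * h)
    (hL : Efun j₀ j₁ (q - h) v ≠ ∞ →
      (Efun j₀ j₁ q v).toReal + τ * h ≤ (Efun j₀ j₁ (q - h) v).toReal) :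
    (Efun j₀ j₁ q v).toReal + τ * (q - h) ≤ (Efun j₀ j₁ ν v).toReal + τ * ν := by
  have hτh : 0 ≤ τ * h := by positivity
  have hE := Efun_antitone (j₀ := j₀) (j₁ := j₁) v
  rcases le_total ν q with hνq | hqν
  · rcases lt_or_ge ν (q - h) with hνl | hνl
    · have hL' := hL (ne_top_of_le_ne_top hν (hE hνl.le))
      have hchord := Efun_chord hνl (by linarith : q - h < q) hν
      have : h * ((Efun j₀ j₁ q v).toReal + τ * (q - ν)) ≤ h * (Efun j₀ j₁ ν v).toReal := by
        linarith [mul_le_mul_of_nonneg_left hL' (by linarith : 0 ≤ q - ν)]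
      linarith [le_of_mul_le_mul_left this hh]
    · have := ENNReal.toReal_mono hν (hE hνq)
      linarith [mul_le_mul_of_nonneg_left hνl hτ]
  · rcases le_or_gt ν (q + h) with hνr | hνr
    · have := ENNReal.toReal_mono hν (hE hνr)
      linarith [mul_le_mul_of_nonneg_left hqν hτ]
    · have hchord := Efun_chord (by linarith : q < q + h) hνr hq
      have : h * (Efun j₀ j₁ q v).toReal ≤ h * ((Efun j₀ j₁ ν v).toReal + τ * (ν - q)) := by
        linarith [mul_le_mul_of_nonneg_left hR (by linarith : 0 ≤ ν - q)]
      linarith [le_of_mul_le_mul_left this hh]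

theorem le_Kfun_of_drops {q h : ℝ} {u : ℝ≥0∞} (hh : 0 < h) (hq : Efun j₀ j₁ q v ≠ ∞)
    (hu : u ≠ ∞) (hR : Efun j₀ j₁ q v ≤ Efun j₀ j₁ (q + h) v + u)
    (hL : Efun j₀ j₁ q v + u ≤ Efun j₀ j₁ (q - h) v) :
    (Efun j₀ j₁ q v).toReal + u.toReal / h * (q - h) ≤ Kfun j₀ j₁ (u.toReal / h) v := by
  have hτh : u.toReal / h * h = u.toReal := div_mul_cancel₀ _ hh.ne'
  have hr : Efun j₀ j₁ (q + h) v ≠ ∞ :=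
    ne_top_of_le_ne_top hq (Efun_antitone v (by linarith : q ≤ q + h))
  have hR' : (Efun j₀ j₁ q v).toReal ≤ (Efun j₀ j₁ (q + h) v).toReal + u.toReal / h * h := by
    rw [hτh, ← ENNReal.toReal_add hr hu]
    exact ENNReal.toReal_mono (by finiteness) hR
  have hL' (hl : Efun j₀ j₁ (q - h) v ≠ ∞) :
      (Efun j₀ j₁ q v).toReal + u.toReal / h * h ≤ (Efun j₀ j₁ (q - h) v).toReal := by
    rw [hτh, ← ENNReal.toReal_add hq hu]
    exact ENNReal.toReal_mono hl hL
  obtain ⟨a₀, b₀, hab₀, -⟩ := exists_eq_add_enorm_lt hq.lt_top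
  refine le_Kfun ⟨a₀, b₀, hab₀⟩ fun a b hab => ?_
  have hEa := Efun_le hab le_rfl
  have hEν : (Efun j₀ j₁ ‖b‖ v).toReal ≤ ‖a‖ := by
    simpa using ENNReal.toReal_mono enorm_ne_top hEa
  have := toReal_Efun_add_le_of_drops hh (by positivity) hq
    (ne_top_of_le_ne_top enorm_ne_top hEa) hR' hL'
  linarith

end Efun

section Sequences

variable {V A₀ A₁ : Type*} [AddCommGroup V] [Module ℝ V]
  [NormedAddCommGroup A₀] [NormedSpace ℝ A₀] [NormedAddCommGroup A₁] [NormedSpace ℝ A₁]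
  {j₀ : A₀ →ₗ[ℝ] V} {j₁ : A₁ →ₗ[ℝ] V} {x : ℕ → V} {t : ℝ}

theorem Kl1linf_nonneg (ht : 0 ≤ t) : 0 ≤ Kl1linf j₀ j₁ t x :=
  Real.sInf_nonneg fun _ ⟨_, b, _, _, _, hr⟩ => hr ▸
    add_nonneg (tsum_nonneg fun _ => norm_nonneg _)
      (mul_nonneg ht (Real.iSup_nonneg fun i => norm_nonneg (b i)))

theorem Kl1linf_le (ht : 0 ≤ t) {a : ℕ → A₀} {b : ℕ → A₁} (ha : Summable fun i => ‖a i‖)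
    (hb : BddAbove (range fun i => ‖b i‖)) (hab : ∀ i, x i = j₀ (a i) + j₁ (b i)) :
    Kl1linf j₀ j₁ t x ≤ (∑' i, ‖a i‖) + t * ⨆ i, ‖b i‖ :=
  csInf_le ⟨0, fun _ ⟨_, b, _, _, _, hr⟩ => hr ▸
    add_nonneg (tsum_nonneg fun _ => norm_nonneg _)
      (mul_nonneg ht (Real.iSup_nonneg fun i => norm_nonneg (b i)))⟩ ⟨a, b, ha, hb, hab, rfl⟩

theorem Kl1linf_le_tsum_Efun (ht : 0 ≤ t) {q ε : ℝ} (hq : ∑' i, Efun j₀ j₁ q (x i) ≠ ∞)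
    (hε : 0 < ε) : Kl1linf j₀ j₁ t x ≤ (∑' i, Efun j₀ j₁ q (x i)).toReal + t * q + ε := by
  obtain ⟨δ, hδ, hδε⟩ := ENNReal.exists_pos_sum_of_countable (ENNReal.ofReal_pos.2 hε).ne' ℕ
  have hq' (i : ℕ) : Efun j₀ j₁ q (x i) ≠ ∞ := ne_top_of_le_ne_top hq (ENNReal.le_tsum i)
  choose a b hab hb ha using fun i => exists_eq_add_enorm_lt
    (ENNReal.lt_add_right (hq' i) (ENNReal.coe_ne_zero.2 (hδ i).ne'))
  have hsum : ∑' i, ‖a i‖ₑ ≤ ∑' i, Efun j₀ j₁ q (x i) + ENNReal.ofReal ε := calc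
    _ ≤ ∑' i, (Efun j₀ j₁ q (x i) + δ i) := ENNReal.tsum_le_tsum fun i => (ha i).le
    _ ≤ _ := by rw [ENNReal.tsum_add]; gcongr
  have hfin : ∑' i, ‖a i‖ₑ ≠ ∞ := ne_top_of_le_ne_top (by finiteness) hsum
  have hsa : Summable fun i => ‖a i‖ := by simpa using ENNReal.summable_toReal hfin
  have hnorm : ∑' i, ‖a i‖ ≤ (∑' i, Efun j₀ j₁ q (x i)).toReal + ε := by
    rw [← ENNReal.toReal_ofReal hε.le, ← ENNReal.toReal_add hq ENNReal.ofReal_ne_top]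
    simpa [ENNReal.tsum_toReal_eq] using ENNReal.toReal_mono (by finiteness) hsum
  calc Kl1linf j₀ j₁ t x ≤ (∑' i, ‖a i‖) + t * ⨆ i, ‖b i‖ :=
        Kl1linf_le ht hsa ⟨q, forall_mem_range.2 hb⟩ hab
    _ ≤ (∑' i, Efun j₀ j₁ q (x i)).toReal + ε + t * q := by gcongr; exact ciSup_le hb
    _ = _ := by ring

theorem summable_Kfun {τ : ℕ → ℝ} (hτ : ∀ i, 0 ≤ τ i) (hτs : Summable τ) {a : ℕ → A₀}
    {b : ℕ → A₁} (ha : Summable fun i => ‖a i‖) (hb : BddAbove (range fun i => ‖b i‖))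
    (hab : ∀ i, x i = j₀ (a i) + j₁ (b i)) : Summable fun i => Kfun j₀ j₁ (τ i) (x i) :=
  .of_nonneg_of_le (fun i => Kfun_nonneg (hτ i))
    (fun i => (Kfun_le (hτ i) (hab i)).trans
      (add_le_add_right (mul_le_mul_of_nonneg_left (le_ciSup hb i) (hτ i)) _))
    (ha.add (hτs.mul_right _))

theorem tsum_Kfun_le {τ : ℕ → ℝ} (hτ : ∀ i, 0 ≤ τ i) (hτs : Summable τ) (hτt : ∑' i, τ i ≤ t)
    (hK : Summable fun i => Kfun j₀ j₁ (τ i) (x i)) {a : ℕ → A₀} {b : ℕ → A₁}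
    (ha : Summable fun i => ‖a i‖) (hb : BddAbove (range fun i => ‖b i‖))
    (hab : ∀ i, x i = j₀ (a i) + j₁ (b i)) :
    ∑' i, Kfun j₀ j₁ (τ i) (x i) ≤ (∑' i, ‖a i‖) + t * ⨆ i, ‖b i‖ := by
  have hbB (i : ℕ) : ‖b i‖ ≤ ⨆ i, ‖b i‖ := le_ciSup hb i
  calc ∑' i, Kfun j₀ j₁ (τ i) (x i) ≤ ∑' i, (‖a i‖ + τ i * ⨆ i, ‖b i‖) :=
        hK.tsum_le_tsum (fun i => (Kfun_le (hτ i) (hab i)).trans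
          (add_le_add_right (mul_le_mul_of_nonneg_left (hbB i) (hτ i)) _))
          (ha.add (hτs.mul_right _))
    _ = (∑' i, ‖a i‖) + (∑' i, τ i) * ⨆ i, ‖b i‖ := by
        rw [ha.tsum_add (hτs.mul_right _), tsum_mul_right]
    _ ≤ _ := by gcongr; exact (norm_nonneg _).trans (hbB 0)

theorem le_KsupSum (hx : MemSumSeq j₀ j₁ x) {τ : ℕ → ℝ} (hτ : ∀ i, 0 ≤ τ i) (hτs : Summable τ)
    (hτt : ∑' i, τ i ≤ t) (hK : Summable fun i => Kfun j₀ j₁ (τ i) (x i)) :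
    ∑' i, Kfun j₀ j₁ (τ i) (x i) ≤ KsupSum j₀ j₁ t x := by
  obtain ⟨a, b, ha, hb, hab⟩ := hx
  exact le_csSup ⟨_, fun _ ⟨τ, hτ, hτs, hτt, hK, hs⟩ => hs ▸ tsum_Kfun_le hτ hτs hτt hK ha hb hab⟩
    ⟨τ, hτ, hτs, hτt, hK, rfl⟩

theorem KsupSum_le_Kl1linf (hx : MemSumSeq j₀ j₁ x) (ht : 0 ≤ t) :
    KsupSum j₀ j₁ t x ≤ Kl1linf j₀ j₁ t x := by
  obtain ⟨a, b, ha, hb, hab⟩ := hx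
  refine Real.sSup_le (fun _ ⟨τ, hτ, hτs, hτt, hK, hs⟩ => ?_) (Kl1linf_nonneg ht)
  exact hs ▸ le_csInf ⟨_, a, b, ha, hb, hab, rfl⟩
    fun _ ⟨a, b, ha, hb, hab, hr⟩ => hr ▸ tsum_Kfun_le hτ hτs hτt hK ha hb hab

theorem exists_drop_weights (hx : MemSumSeq j₀ j₁ x) {c : ℝ≥0∞} (hc : c ≠ 0) {h : ℝ}
    (hh : 0 < h) : ∃ q, ∑' i, Efun j₀ j₁ q (x i) ≠ ∞ ∧ ∃ u : ℕ → ℝ≥0∞, ∑' i, u i = c ∧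
      ∀ i, Efun j₀ j₁ q (x i) ≤ Efun j₀ j₁ (q + h) (x i) + u i ∧
        Efun j₀ j₁ q (x i) + u i ≤ Efun j₀ j₁ (q - h) (x i) := by
  obtain ⟨a, b, ha, hb, hab⟩ := hx
  set F : ℝ → ℝ≥0∞ := fun μ => ∑' i, Efun j₀ j₁ μ (x i)
  have hF : Antitone F := fun _ _ hμ => ENNReal.tsum_le_tsum fun i => Efun_antitone _ hμ
  have hbot : F (-1) = ∞ := ENNReal.tsum_eq_top_of_eq_top ⟨0, Efun_of_neg (by norm_num)⟩
  have hfin : F (⨆ i, ‖b i‖) ≠ ∞ := by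
    refine ne_top_of_le_ne_top ?_ (ENNReal.tsum_le_tsum fun i => Efun_le (hab i) (le_ciSup hb i))
    simpa [ENNReal.ofReal_tsum_of_nonneg (fun i => norm_nonneg (a i)) ha] using
      (ENNReal.ofReal_ne_top (r := ∑' i, ‖a i‖))
  obtain ⟨q, hq, hR, hL⟩ := hF.exists_drop_crossing hh hc hbot hfin
  have hEq (i : ℕ) : Efun j₀ j₁ q (x i) ≠ ∞ := ne_top_of_le_ne_top hq (ENNReal.le_tsum i)
  have hqh : q ≤ q + h := by linarith
  have hRc : ∑' i, (Efun j₀ j₁ q (x i) - Efun j₀ j₁ (q + h) (x i)) ≤ c := by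
    refine ENNReal.le_of_add_le_add_right (ne_top_of_le_ne_top hq (hF hqh)) ?_
    rw [← ENNReal.tsum_add]
    simpa only [tsub_add_cancel_of_le (Efun_antitone _ hqh), add_comm c]
  have hcL : c ≤ ∑' i, (Efun j₀ j₁ (q - h) (x i) - Efun j₀ j₁ q (x i)) := by
    refine ENNReal.le_of_add_le_add_left hq (hL.trans ?_)
    rw [← ENNReal.tsum_add]
    exact ENNReal.tsum_le_tsum fun i => le_add_tsub
  obtain ⟨u, hRu, huL, hu⟩ := ENNReal.exists_tsum_eq_of_le_of_le
    (fun i => Efun_sub_le_sub hh (hEq i)) hRc hcL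
  exact ⟨q, hq, u, hu, fun i => ⟨tsub_le_iff_left.1 (hRu i),
    add_le_of_le_tsub_left_of_le (Efun_antitone _ (by linarith)) (huL i)⟩⟩

theorem exists_tsum_Kfun_ge (hx : MemSumSeq j₀ j₁ x) (ht : 0 < t) {h : ℝ} (hh : 0 < h) :
    ∃ q, ∑' i, Efun j₀ j₁ q (x i) ≠ ∞ ∧ ∃ τ : ℕ → ℝ, (∀ i, 0 ≤ τ i) ∧ Summable τ ∧
      ∑' i, τ i = t ∧ Summable (fun i => Kfun j₀ j₁ (τ i) (x i)) ∧
      (∑' i, Efun j₀ j₁ q (x i)).toReal + t * (q - h) ≤ ∑' i, Kfun j₀ j₁ (τ i) (x i) := by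
  obtain ⟨q, hq, u, hu, hdrops⟩ :=
    exists_drop_weights hx (ENNReal.ofReal_pos.2 (mul_pos ht hh)).ne' hh
  have hEq (i : ℕ) : Efun j₀ j₁ q (x i) ≠ ∞ := ne_top_of_le_ne_top hq (ENNReal.le_tsum i)
  have hu' : ∑' i, u i ≠ ∞ := hu ▸ ENNReal.ofReal_ne_top
  have hufin (i : ℕ) : u i ≠ ∞ := ne_top_of_le_ne_top hu' (ENNReal.le_tsum i)
  set τ : ℕ → ℝ := fun i => (u i).toReal / h
  have hτs : Summable τ := (ENNReal.summable_toReal hu').div_const h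
  have hτt : ∑' i, τ i = t := by
    rw [tsum_div_const, ← ENNReal.tsum_toReal_eq hufin, hu,
      ENNReal.toReal_ofReal (mul_pos ht hh).le, mul_div_cancel_right₀ _ hh.ne']
  have hEs : Summable fun i => (Efun j₀ j₁ q (x i)).toReal := ENNReal.summable_toReal hq
  obtain ⟨a, b, ha, hb, hab⟩ := hx
  have hK := summable_Kfun (fun i => by positivity) hτs ha hb hab
  refine ⟨q, hq, τ, fun i => by positivity, hτs, hτt, hK, ?_⟩
  calc (∑' i, Efun j₀ j₁ q (x i)).toReal + t * (q - h)
      = ∑' i, ((Efun j₀ j₁ q (x i)).toReal + τ i * (q - h)) := by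
        rw [hEs.tsum_add (hτs.mul_right _), tsum_mul_right, hτt, ENNReal.tsum_toReal_eq hEq]
    _ ≤ _ := (hEs.add (hτs.mul_right _)).tsum_le_tsum
        (fun i => le_Kfun_of_drops hh (hEq i) (hufin i) (hdrops i).1 (hdrops i).2) hK

end Sequences

theorem Kl1linf_eq_KsupSum_general
    {V A₀ A₁ : Type*} [AddCommGroup V] [Module ℝ V]
    [NormedAddCommGroup A₀] [NormedSpace ℝ A₀]
    [NormedAddCommGroup A₁] [NormedSpace ℝ A₁]
    (j₀ : A₀ →ₗ[ℝ] V) (j₁ : A₁ →ₗ[ℝ] V)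
    (x : ℕ → V) (hx : MemSumSeq j₀ j₁ x) (t : ℝ) (ht : 0 < t) :
    Kl1linf j₀ j₁ t x = KsupSum j₀ j₁ t x := by
  refine le_antisymm (le_of_forall_pos_le_add fun ε hε => ?_) (KsupSum_le_Kl1linf hx ht.le)
  obtain ⟨q, hq, τ, hτ, hτs, hτt, hK, hlow⟩ :=
    exists_tsum_Kfun_ge hx ht (h := ε / (2 * t)) (by positivity)
  have hupp := Kl1linf_le_tsum_Efun ht.le hq (half_pos hε)
  have hsup := le_KsupSum hx hτ hτs hτt.le hK
  have : t * (ε / (2 * t)) = ε / 2 := by field_simp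
  linarith

/-- Corollary 3: for every `x ∈ ℓ₁(A₀) + ℓ_∞(A₁)` (no finite support assumption),
`K_t(x; ℓ₁(A₀), ℓ_∞(A₁)) = sup { Σᵢ K_{tᵢ}(xᵢ; A₀, A₁) : tᵢ ≥ 0, Σ tᵢ ≤ t }`. -/
theorem Kl1linf_eq_KsupSum
    {V A₀ A₁ : Type*} [AddCommGroup V] [Module ℝ V] [TopologicalSpace V]
    [IsTopologicalAddGroup V] [ContinuousSMul ℝ V] [T2Space V]
    [NormedAddCommGroup A₀] [NormedSpace ℝ A₀] [CompleteSpace A₀]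
    [NormedAddCommGroup A₁] [NormedSpace ℝ A₁] [CompleteSpace A₁]
    (j₀ : A₀ →ₗ[ℝ] V) (j₁ : A₁ →ₗ[ℝ] V)
    (hc₀ : Continuous j₀) (hc₁ : Continuous j₁)
    (hi₀ : Function.Injective j₀) (hi₁ : Function.Injective j₁)
    (x : ℕ → V) (hx : MemSumSeq j₀ j₁ x) (t : ℝ) (ht : 0 < t) :
    Kl1linf j₀ j₁ t x = KsupSum j₀ j₁ t x :=
  Kl1linf_eq_KsupSum_general j₀ j₁ x hx t ht
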